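/- arXiv:1407.5486 — 2 statements merged into one kernel-verified Lean document; each statement's English description precedes it below -/
import Mathlib

section
/- Let C be a bounded linear operator on ℓ²(ℕ) that is tridiagonal with real matrix entries, symmetric (C_{j+1,j} = C_{j,j+1}), and satisfies C_{j,j} > 0 and C_{j,j+1} > 0 for all j ∈ ℕ; let ν be a real number with ν > sup_{j∈ℕ} C_{j,j}. If there exists a sequence (g_j)_{j∈ℕ} with g_j ∈ [0,1] for all j and C_{j,j+1}² / ((ν − C_{j,j})(ν − C_{j+1,j+1})) ≤ g_{j+1}(1 − g_j) for all j ∈ ℕ, then r₀(C) ≤ ν. -/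
noncomputable section
open Filter Complex Topology
open scoped ENNReal

/-- The Hilbert space ℓ²(ℤ). -/
abbrev HZ := lp (fun _ : ℤ => ℂ) 2

/-- The standard orthonormal basis of ℓ²(ℤ). -/
def eZ (i : ℤ) : HZ := lp.single 2 i 1

/-- Matrix entry `A_{i,j} = ⟨A e_j, e_i⟩` (inner product linear in the first slot,
here written in Mathlib's convention which is conjugate-linear in the first slot). -/
def entry (A : HZ →L[ℂ] HZ) (i j : ℤ) : ℂ := inner ℂ (eZ i) (A (eZ j))

/-- The (closed) numerical range `N(A) = clos {⟨Ax,x⟩ : ‖x‖ = 1}`. -/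
def numRange (A : HZ →L[ℂ] HZ) : Set ℂ :=
  closure {z | ∃ x : HZ, ‖x‖ = 1 ∧ (inner ℂ x (A x) : ℂ) = z}

/-- The numerical abscissa `r₀(A) = max {Re z : z ∈ N(A)}`. -/
def r0 (A : HZ →L[ℂ] HZ) : ℝ := sSup (Complex.re '' numRange A)

/-- The rotated numerical abscissa `r_φ(A) = max {Re z : z ∈ N(e^{iφ}A)}`. -/
def rphi (φ : ℝ) (A : HZ →L[ℂ] HZ) : ℝ := r0 (Complex.exp (φ * Complex.I) • A)

lemma memShift (k : ℤ) (x : HZ) : Memℓp (fun j => x (j - k)) 2 := by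
  have h := lp.memℓp x
  rw [memℓp_gen_iff (by norm_num)] at h ⊢
  simpa [Function.comp_def] using ((Equiv.subRight k).summable_iff (f := fun i => ‖x i‖ ^ (2:ℝ≥0∞).toReal)).mpr h

def shiftLM (k : ℤ) : HZ →ₗ[ℂ] HZ where
  toFun x := ⟨fun j => x (j - k), memShift k x⟩
  map_add' x y := by ext j; simp [lp.coeFn_add]; rfl
  map_smul' c x := by ext j; simp [lp.coeFn_smul]

lemma shift_norm (k : ℤ) (x : HZ) : ‖shiftLM k x‖ = ‖x‖ := by
  rw [lp.norm_eq_tsum_rpow (by norm_num) x, lp.norm_eq_tsum_rpow (by norm_num) (shiftLM k x)]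
  congr 1
  exact (Equiv.subRight k).tsum_eq (f := fun i => ‖x i‖ ^ (2:ℝ≥0∞).toReal)

/-- The shift operator `V_k` on ℓ²(ℤ), `(V_k x)_j = x_{j-k}`. -/
def Vshift (k : ℤ) : HZ →L[ℂ] HZ :=
  LinearIsometry.toContinuousLinearMap ⟨shiftLM k, shift_norm k⟩

/-- `B` is a limit operator of `A`: there is a sequence of integers `h` with `|h m| → ∞`
such that `V_{-h_m} A V_{h_m} → B` strongly. -/
def IsLimOp (A B : HZ →L[ℂ] HZ) : Prop :=
  ∃ h : ℕ → ℤ, Tendsto (fun m => |h m|) atTop atTop ∧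
    ∀ x : HZ, Tendsto (fun m => Vshift (-(h m)) (A (Vshift (h m) x))) atTop (𝓝 (B x))

/-- The operator spectrum: the set of all limit operators of `A`. -/
def opSpec (A : HZ →L[ℂ] HZ) : Set (HZ →L[ℂ] HZ) := {B | IsLimOp A B}

/-- A band operator: only finitely many diagonals are nonzero. -/
def IsBandOp (A : HZ →L[ℂ] HZ) : Prop :=
  ∃ N : ℕ, ∀ i j : ℤ, (N : ℤ) < |i - j| → entry A i j = 0

/-- `M(U_n, …, U_m)`: the k-th diagonal has entries in `U k` for `n ≤ k ≤ m`,
and all other diagonals vanish. -/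
def Mset (n m : ℤ) (U : ℤ → Set ℂ) : Set (HZ →L[ℂ] HZ) :=
  {A | ∀ i k : ℤ, (n ≤ k → k ≤ m → entry A (i + k) i ∈ U k) ∧
      (¬(n ≤ k ∧ k ≤ m) → entry A (i + k) i = 0)}

/-- The orthogonal projection `P_{k,l}` onto `span{e_k, …, e_l}`. -/
def projIcc (k l : ℤ) : HZ →L[ℂ] HZ :=
  ∑ i ∈ Finset.Icc k l, (innerSL ℂ (eZ i)).smulRight (eZ i)

/-- The finite matrix `b` placed in `ℓ²(ℤ)` with rows/columns at positions `k, …, k+s`. -/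
def embedMat (k : ℤ) (s : ℕ) (b : Fin (s+1) → Fin (s+1) → ℂ) : HZ →L[ℂ] HZ :=
  ∑ p : Fin (s+1), ∑ q : Fin (s+1),
    b p q • (innerSL ℂ (eZ (k + (q : ℤ)))).smulRight (eZ (k + (p : ℤ)))

/-- A finite square matrix whose k-th diagonal entries lie in `U k` for `n ≤ k ≤ m`
and whose remaining entries vanish. -/
def finPattern (n m : ℤ) (U : ℤ → Set ℂ) (s : ℕ) (b : Fin (s+1) → Fin (s+1) → ℂ) : Prop :=
  ∀ p q : Fin (s+1), (n ≤ (p : ℤ) - (q : ℤ) → (p : ℤ) - (q : ℤ) ≤ m →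
      b p q ∈ U ((p : ℤ) - (q : ℤ))) ∧
    (¬(n ≤ (p : ℤ) - (q : ℤ) ∧ (p : ℤ) - (q : ℤ) ≤ m) → b p q = 0)

/-- Pseudo-ergodic operators `ΨE(U_n, …, U_m)`. -/
def PsiE (n m : ℤ) (U : ℤ → Set ℂ) : Set (HZ →L[ℂ] HZ) :=
  {A | A ∈ Mset n m U ∧ ∀ ε > (0:ℝ), ∀ (s : ℕ) (b : Fin (s+1) → Fin (s+1) → ℂ),
    finPattern n m U s b → ∃ k : ℤ,
      ‖projIcc k (k + s) ∘L A ∘L projIcc k (k + s) - embedMat k s b‖ ≤ ε}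

/-- The essential spectrum: the set of `λ` such that `A - λI` is not Fredholm. -/
def essSpec (A : HZ →L[ℂ] HZ) : Set ℂ :=
  {lam | ¬(FiniteDimensional ℂ (LinearMap.ker ((A - lam • (1 : HZ →L[ℂ] HZ) : HZ →ₗ[ℂ] HZ))) ∧
      FiniteDimensional ℂ ((LinearMap.range ((A - lam • (1 : HZ →L[ℂ] HZ) : HZ →ₗ[ℂ] HZ)))ᗮ))}

/-- The Hilbert space ℓ²(ℕ). -/
abbrev HN := lp (fun _ : ℕ => ℂ) 2

def eN (i : ℕ) : HN := lp.single 2 i 1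

def entryN (A : HN →L[ℂ] HN) (i j : ℕ) : ℂ := inner ℂ (eN i) (A (eN j))

def numRangeN (A : HN →L[ℂ] HN) : Set ℂ :=
  closure {z | ∃ x : HN, ‖x‖ = 1 ∧ (inner ℂ x (A x) : ℂ) = z}

def r0N (A : HN →L[ℂ] HN) : ℝ := sSup (Complex.re '' numRangeN A)


/-! Let `a_j = C_{j,j}`, `b_j = C_{j,j+1}`, `p_j = ν - a_j > 0` and, for `x ∈ ℓ²`, `u_j = |x_j|`.
As `C` is real, symmetric and tridiagonal, `Re ⟨x, C x⟩ = ∑ a_j u_j² + 2 ∑ b_j Re (x̄_j x_{j+1})`.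
The hypothesis `b_j² ≤ g_{j+1} (1 - g_j) p_j p_{j+1}` and AM-GM give
`2 |b_j| u_j u_{j+1} ≤ (1 - g_j) p_j u_j² + g_{j+1} p_{j+1} u_{j+1}²`; the right-hand sides sum to
`∑ p_j u_j² - g_0 p_0 u_0² ≤ ∑ p_j u_j²`. Hence `Re ⟨x, C x⟩ ≤ ∑ (a_j + p_j) u_j² = ν ‖x‖²`. -/

lemma two_mul_abs_le_of_sq_div_le {b p q g h c d : ℝ} (hp : 0 < p) (hq : 0 < q) (hg : g ≤ 1)
    (hh : 0 ≤ h) (hb : b ^ 2 / (p * q) ≤ h * (1 - g)) :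
    2 * |b * c * d| ≤ (1 - g) * p * c ^ 2 + h * q * d ^ 2 := by
  have hs : 0 ≤ (1 - g) * p * c ^ 2 := by have := sub_nonneg.2 hg; positivity
  have ht : 0 ≤ h * q * d ^ 2 := by positivity
  have hb' : b ^ 2 ≤ h * (1 - g) * (p * q) := (div_le_iff₀ (by positivity)).1 hb
  have hprod : (b * c * d) ^ 2 ≤ ((1 - g) * p * c ^ 2) * (h * q * d ^ 2) := by
    calc (b * c * d) ^ 2 = b ^ 2 * (c * d) ^ 2 := by ring
      _ ≤ h * (1 - g) * (p * q) * (c * d) ^ 2 := by gcongr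
      _ = _ := by ring
  rw [← abs_two, ← abs_mul]
  exact abs_le_of_sq_le_sq (by nlinarith [sq_nonneg ((1 - g) * p * c ^ 2 - h * q * d ^ 2)])
    (add_nonneg hs ht)

lemma two_mul_tsum_le_of_schur {p b g u w : ℕ → ℝ} (hp : ∀ j, 0 < p j)
    (hg : ∀ j, g j ∈ Set.Icc (0 : ℝ) 1)
    (hschur : ∀ j, b j ^ 2 / (p j * p (j + 1)) ≤ g (j + 1) * (1 - g j))
    (hw : ∀ j, |w j| ≤ u j * u (j + 1)) (hpu : Summable fun j => p j * u j ^ 2) :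
    2 * ∑' j, b j * w j ≤ ∑' j, p j * u j ^ 2 := by
  set α : ℕ → ℝ := fun j => (1 - g j) * p j * u j ^ 2
  set β : ℕ → ℝ := fun j => g j * p j * u j ^ 2
  have hαβ : ∀ j, α j + β j = p j * u j ^ 2 := fun j => by ring
  have hα0 : ∀ j, 0 ≤ α j := fun j => by have := sub_nonneg.2 (hg j).2; have := hp j; positivity
  have hβ0 : ∀ j, 0 ≤ β j := fun j => by have := (hg j).1; have := hp j; positivity
  have hα : Summable α := hpu.of_nonneg_of_le hα0 fun j => by linarith [hαβ j, hβ0 j]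
  have hβ : Summable β := hpu.of_nonneg_of_le hβ0 fun j => by linarith [hαβ j, hα0 j]
  have hdom : Summable fun j => α j + β (j + 1) := hα.add ((summable_nat_add_iff 1).2 hβ)
  have hterm : ∀ j, 2 * |b j * w j| ≤ α j + β (j + 1) := fun j => by
    have huu : 0 ≤ u j * u (j + 1) := (abs_nonneg _).trans (hw j)
    calc 2 * |b j * w j| ≤ 2 * |b j * u j * u (j + 1)| := by
          rw [abs_mul, mul_assoc, abs_mul (b j), abs_of_nonneg huu]; gcongr; exact hw j
      _ ≤ α j + β (j + 1) :=
          two_mul_abs_le_of_sq_div_le (hp j) (hp (j + 1)) (hg j).2 (hg (j + 1)).1 (hschur j)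
  have hbw : Summable fun j => b j * w j :=
    hdom.of_norm_bounded fun j => by
      rw [Real.norm_eq_abs]; linarith [hterm j, abs_nonneg (b j * w j)]
  calc 2 * ∑' j, b j * w j = ∑' j, 2 * (b j * w j) := (tsum_mul_left).symm
    _ ≤ ∑' j, (α j + β (j + 1)) :=
        (hbw.mul_left 2).tsum_le_tsum
          (fun j => (le_abs_self _).trans (by rw [abs_mul, abs_two]; exact hterm j)) hdom
    _ = ∑' j, α j + ∑' j, β j - β 0 := by
        rw [hα.tsum_add ((summable_nat_add_iff 1).2 hβ), hβ.tsum_eq_zero_add]; ring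
    _ ≤ ∑' j, p j * u j ^ 2 := by
        rw [← hα.tsum_add hβ]; simp only [hαβ]; linarith [hβ0 0]

lemma inner_eN_left (i : ℕ) (y : HN) : inner ℂ (eN i) y = y i := by
  simp [eN, lp.inner_single_left]

lemma entryN_eq_apply (C : HN →L[ℂ] HN) (i j : ℕ) : entryN C i j = C (eN j) i :=
  inner_eN_left i _

lemma norm_eN (i : ℕ) : ‖eN i‖ = 1 := by
  simp [eN, lp.norm_single]

lemma norm_entryN_le (C : HN →L[ℂ] HN) (i j : ℕ) : ‖entryN C i j‖ ≤ ‖C‖ :=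
  calc ‖entryN C i j‖ ≤ ‖C (eN j)‖ := by
        rw [entryN_eq_apply]; exact lp.norm_apply_le_norm two_ne_zero _ _
    _ ≤ ‖C‖ := by simpa [norm_eN] using C.le_opNorm (eN j)

lemma abs_re_entryN_le (C : HN →L[ℂ] HN) (i j : ℕ) : |(entryN C i j).re| ≤ ‖C‖ :=
  (Complex.abs_re_le_norm _).trans (norm_entryN_le C i j)

lemma hasSum_entryN_mul (C : HN →L[ℂ] HN) (x : HN) (i : ℕ) :
    HasSum (fun j => entryN C i j * x j) (C x i) := by
  have hx : HasSum (fun j => x j • eN j) x := by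
    simpa [eN, ← lp.single_smul] using lp.hasSum_single ENNReal.ofNat_ne_top x
  simpa [entryN, inner_eN_left, mul_comm] using ((innerSL ℂ (eN i)).comp C).hasSum hx

lemma hasSum_norm_sq (x : HN) : HasSum (fun j => ‖x j‖ ^ 2) (‖x‖ ^ 2) := by
  simpa [← Complex.ofReal_pow] using Complex.hasSum_re (lp.hasSum_inner x x)

lemma summable_re_entryN_mul_norm_sq (C : HN →L[ℂ] HN) (x : HN) :
    Summable fun j => (entryN C j j).re * ‖x j‖ ^ 2 :=
  ((hasSum_norm_sq x).summable.mul_left ‖C‖).of_norm_bounded fun j => by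
    rw [norm_mul, norm_pow, norm_norm, Real.norm_eq_abs]
    exact mul_le_mul_of_nonneg_right (abs_re_entryN_le C j j) (by positivity)

open ComplexConjugate

lemma apply_zero_of_tridiagonal {C : HN →L[ℂ] HN}
    (htri : ∀ i j : ℕ, 1 < ((i : ℤ) - (j : ℤ)).natAbs → entryN C i j = 0) (x : HN) :
    C x 0 = entryN C 0 0 * x 0 + entryN C 0 1 * x 1 := by
  refine (hasSum_entryN_mul C x 0).unique ?_
  convert hasSum_sum_of_ne_finset_zero (L := SummationFilter.unconditional ℕ) (s := {0, 1})
    fun j hj => ?_ using 1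
  · simp
  · rw [htri 0 j (by simp at hj; omega), zero_mul]

lemma apply_succ_of_tridiagonal {C : HN →L[ℂ] HN}
    (htri : ∀ i j : ℕ, 1 < ((i : ℤ) - (j : ℤ)).natAbs → entryN C i j = 0) (x : HN) (i : ℕ) :
    C x (i + 1) = entryN C (i + 1) i * x i + entryN C (i + 1) (i + 1) * x (i + 1)
      + entryN C (i + 1) (i + 2) * x (i + 2) := by
  refine (hasSum_entryN_mul C x (i + 1)).unique ?_
  convert hasSum_sum_of_ne_finset_zero (L := SummationFilter.unconditional ℕ)
    (s := {i, i + 1, i + 2}) fun j hj => ?_ using 1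
  · rw [Finset.sum_insert (by simp), Finset.sum_pair (by omega), add_assoc]
  · rw [htri (i + 1) j (by simp at hj; omega), zero_mul]

lemma abs_re_conj_mul_le (z w : ℂ) : |(conj z * w).re| ≤ ‖z‖ * ‖w‖ :=
  (Complex.abs_re_le_norm _).trans (by simp)

lemma re_inner_apply_of_tridiagonal {C : HN →L[ℂ] HN}
    (htri : ∀ i j : ℕ, 1 < ((i : ℤ) - (j : ℤ)).natAbs → entryN C i j = 0)
    (hreal : ∀ i j : ℕ, (entryN C i j).im = 0)
    (hsym : ∀ j : ℕ, entryN C (j + 1) j = entryN C j (j + 1)) (x : HN) :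
    (inner ℂ x (C x)).re = ∑' j, (entryN C j j).re * ‖x j‖ ^ 2
      + 2 * ∑' j, (entryN C j (j + 1)).re * (conj (x j) * x (j + 1)).re := by
  set a : ℕ → ℝ := fun j => (entryN C j j).re
  set b : ℕ → ℝ := fun j => (entryN C j (j + 1)).re
  set w : ℕ → ℝ := fun j => (conj (x j) * x (j + 1)).re
  have hofReal : ∀ i j, entryN C i j = (entryN C i j).re := fun i j =>
    Complex.ext rfl (by simp [hreal])
  have hterm_zero : (conj (x 0) * C x 0).re = a 0 * ‖x 0‖ ^ 2 + b 0 * w 0 := by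
    rw [apply_zero_of_tridiagonal htri, hofReal 0 0, hofReal 0 1]
    simp only [a, b, w, mul_re, mul_im, add_re, add_im, conj_re, conj_im, ofReal_re, ofReal_im,
      Complex.sq_norm, normSq_apply]
    ring
  have hterm_succ : ∀ k, (conj (x (k + 1)) * C x (k + 1)).re
      = b k * w k + a (k + 1) * ‖x (k + 1)‖ ^ 2 + b (k + 1) * w (k + 1) := fun k => by
    rw [apply_succ_of_tridiagonal htri, hsym, hofReal k, hofReal (k + 1) (k + 1),
      hofReal (k + 1) (k + 2)]
    simp only [a, b, w, mul_re, mul_im, add_re, add_im, conj_re, conj_im, ofReal_re, ofReal_im,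
      Complex.sq_norm, normSq_apply]
    ring
  have hnorm := (hasSum_norm_sq x).summable
  have ha : Summable fun j => a j * ‖x j‖ ^ 2 := summable_re_entryN_mul_norm_sq C x
  have hb : Summable fun j => b j * w j :=
    ((hnorm.add ((summable_nat_add_iff 1).2 hnorm)).mul_left ‖C‖).of_norm_bounded fun j => by
      rw [norm_mul, Real.norm_eq_abs, Real.norm_eq_abs]
      refine mul_le_mul (abs_re_entryN_le C _ _)
        ((abs_re_conj_mul_le _ _).trans ?_) (abs_nonneg _) (norm_nonneg _)
      nlinarith [sq_nonneg (‖x j‖ - ‖x (j + 1)‖)]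
  have hS : HasSum (fun i => (conj (x i) * C x i).re) (inner ℂ x (C x)).re := by
    simpa [mul_comm] using Complex.hasSum_re (lp.hasSum_inner x (C x))
  have htail := (hasSum_nat_add_iff' 1).2 hS
  simp only [hterm_succ] at htail
  have hsplit := (hb.hasSum.add ((hasSum_nat_add_iff' 1).2 ha.hasSum)).add
    ((hasSum_nat_add_iff' 1).2 hb.hasSum)
  have hsum := htail.unique hsplit
  simp only [Finset.sum_range_one, hterm_zero] at hsum
  linarith

lemma re_inner_apply_le_of_schur {C : HN →L[ℂ] HN}
    (htri : ∀ i j : ℕ, 1 < ((i : ℤ) - (j : ℤ)).natAbs → entryN C i j = 0)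
    (hreal : ∀ i j : ℕ, (entryN C i j).im = 0)
    (hsym : ∀ j : ℕ, entryN C (j + 1) j = entryN C j (j + 1))
    {ν : ℝ} (hdiag : ∀ j : ℕ, (entryN C j j).re < ν)
    {g : ℕ → ℝ} (hg : ∀ j : ℕ, g j ∈ Set.Icc (0 : ℝ) 1)
    (hschur : ∀ j : ℕ, (entryN C j (j + 1)).re ^ 2 /
        ((ν - (entryN C j j).re) * (ν - (entryN C (j + 1) (j + 1)).re)) ≤ g (j + 1) * (1 - g j))
    (x : HN) : (inner ℂ x (C x)).re ≤ ν * ‖x‖ ^ 2 := by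
  have hnorm := hasSum_norm_sq x
  have ha := summable_re_entryN_mul_norm_sq C x
  have hpu : Summable fun j => (ν - (entryN C j j).re) * ‖x j‖ ^ 2 := by
    simpa only [sub_mul] using (hnorm.summable.mul_left ν).sub ha
  have hoff := two_mul_tsum_le_of_schur (fun j => sub_pos.2 (hdiag j)) hg hschur
    (fun j => abs_re_conj_mul_le (x j) (x (j + 1))) hpu
  calc (inner ℂ x (C x)).re
      ≤ ∑' j, (entryN C j j).re * ‖x j‖ ^ 2
          + ∑' j, (ν - (entryN C j j).re) * ‖x j‖ ^ 2 := by
        rw [re_inner_apply_of_tridiagonal htri hreal hsym x]; linarith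
    _ = ν * ‖x‖ ^ 2 := by
        rw [← ha.tsum_add hpu, ← hnorm.tsum_eq, ← tsum_mul_left]; congr 1; ext j; ring

lemma r0N_le_of_re_inner_le {A : HN →L[ℂ] HN} {ν : ℝ}
    (h : ∀ x : HN, ‖x‖ = 1 → (inner ℂ x (A x)).re ≤ ν) : r0N A ≤ ν := by
  have hsub : numRangeN A ⊆ {z : ℂ | z.re ≤ ν} :=
    closure_minimal (by rintro _ ⟨x, hx, rfl⟩; exact h x hx)
      (isClosed_le Complex.continuous_re continuous_const)
  have hne : (numRangeN A).Nonempty := ⟨_, subset_closure ⟨eN 0, norm_eN 0, rfl⟩⟩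
  refine csSup_le (hne.image _) ?_
  rintro _ ⟨z, hz, rfl⟩
  exact hsub hz

theorem r0_le_of_schur_test_general
    (C : HN →L[ℂ] HN)
    (htri : ∀ i j : ℕ, 1 < ((i : ℤ) - (j : ℤ)).natAbs → entryN C i j = 0)
    (hreal : ∀ i j : ℕ, (entryN C i j).im = 0)
    (hsym : ∀ j : ℕ, entryN C (j + 1) j = entryN C j (j + 1))
    (ν : ℝ) (hν : (⨆ j : ℕ, (entryN C j j).re) < ν)
    (gs : ℕ → ℝ) (hg : ∀ j : ℕ, gs j ∈ Set.Icc (0 : ℝ) 1)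
    (hineq : ∀ j : ℕ, (entryN C j (j + 1)).re ^ 2 /
        ((ν - (entryN C j j).re) * (ν - (entryN C (j + 1) (j + 1)).re))
          ≤ gs (j + 1) * (1 - gs j)) :
    r0N C ≤ ν := by
  have hbdd : BddAbove (Set.range fun j => (entryN C j j).re) :=
    ⟨‖C‖, by rintro _ ⟨j, rfl⟩; exact (le_abs_self _).trans (abs_re_entryN_le C j j)⟩
  have hdiag : ∀ j, (entryN C j j).re < ν := fun j => (le_ciSup hbdd j).trans_lt hν
  refine r0N_le_of_re_inner_le fun x hx => ?_
  simpa [hx] using re_inner_apply_le_of_schur htri hreal hsym hdiag hg hineq x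

/-- Szwarc's Schur-test bound. Let `C` be a bounded, real, symmetric,
tridiagonal operator on `ℓ²(ℕ)` with positive diagonal and superdiagonal entries, and
`ν > sup_j C_{j,j}`. If a sequence `(g_j) ⊆ [0,1]` satisfies the Schur-test inequality
`C_{j,j+1}² / ((ν − C_{j,j})(ν − C_{j+1,j+1})) ≤ g_{j+1}(1 − g_j)`, then `r₀(C) ≤ ν`. -/
theorem r0_le_of_schur_test
    (C : HN →L[ℂ] HN)
    (htri : ∀ i j : ℕ, 1 < ((i : ℤ) - (j : ℤ)).natAbs → entryN C i j = 0)
    (hreal : ∀ i j : ℕ, (entryN C i j).im = 0)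
    (hsym : ∀ j : ℕ, entryN C (j + 1) j = entryN C j (j + 1))
    (hdiag : ∀ j : ℕ, 0 < (entryN C j j).re)
    (hoff : ∀ j : ℕ, 0 < (entryN C j (j + 1)).re)
    (ν : ℝ) (hν : (⨆ j : ℕ, (entryN C j j).re) < ν)
    (gs : ℕ → ℝ) (hg : ∀ j : ℕ, gs j ∈ Set.Icc (0 : ℝ) 1)
    (hineq : ∀ j : ℕ, (entryN C j (j + 1)).re ^ 2 /
        ((ν - (entryN C j j).re) * (ν - (entryN C (j + 1) (j + 1)).re))
          ≤ gs (j + 1) * (1 - gs j)) :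
    r0N C ≤ ν :=
  r0_le_of_schur_test_general C htri hreal hsym ν hν gs hg hineq
end
end

section
/- Let A be a bounded tridiagonal operator on ℓ²(ℤ) that is 2-periodic (A_{i+2,j+2} = A_{i,j} for all i,j ∈ ℤ), let ν be a real number with ν > sup_{i∈ℤ} Re A_{i,i}, and assume that A + A* is not a diagonal operator. Define η₁ := |A_{1,2} + conj(A_{2,1})|² / (4(ν − Re A_{1,1})(ν − Re A_{2,2})) and η₂ := |A_{2,3} + conj(A_{3,2})|² / (4(ν − Re A_{2,2})(ν − Re A_{3,3})). Then √η₁ + √η₂ = 1 if and only if ν = r₀(A). -/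
noncomputable section
open Filter Complex Topology
open scoped ENNReal

namespace S12

local notation "⟪" x ", " y "⟫" => @inner ℂ _ _ x y

lemma inner_eZ_left (i : ℤ) (y : HZ) : ⟪eZ i, y⟫ = y i := by
  rw [eZ, lp.inner_single_left]
  simp [RCLike.inner_apply]

lemma eZ_apply (i j : ℤ) : (eZ i : ∀ _, ℂ) j = if j = i then 1 else 0 := by
  by_cases h : j = i
  · subst h
    rw [eZ, lp.single_apply_self]
    simp
  · rw [eZ, lp.single_apply_ne _ _ _ h, if_neg h]

lemma inner_eZ_eZ (i j : ℤ) : ⟪eZ i, eZ j⟫ = if i = j then 1 else 0 := by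
  rw [inner_eZ_left, eZ_apply]

/-- Off-diagonal combination `c_j = A_{j,j+1} + conj A_{j+1,j}`. -/
def cc (A : HZ →L[ℂ] HZ) (j : ℤ) : ℂ :=
  entry A j (j+1) + (starRingEnd ℂ) (entry A (j+1) j)

lemma inner_sum_sum (A : HZ →L[ℂ] HZ) (F : Finset ℤ) (c : ℤ → ℂ) :
    ⟪∑ i ∈ F, c i • eZ i, A (∑ j ∈ F, c j • eZ j)⟫ =
      ∑ i ∈ F, ∑ j ∈ F, (starRingEnd ℂ) (c i) * c j * entry A i j := by
  rw [map_sum, sum_inner]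
  refine Finset.sum_congr rfl fun i _ => ?_
  rw [inner_sum]
  refine Finset.sum_congr rfl fun j _ => ?_
  rw [map_smul, inner_smul_left, inner_smul_right, entry]
  ring

lemma norm_sq_sum (F : Finset ℤ) (c : ℤ → ℂ) :
    ‖∑ i ∈ F, c i • eZ i‖ ^ 2 = ∑ i ∈ F, ‖c i‖ ^ 2 := by
  have h : (⟪∑ i ∈ F, c i • eZ i, ∑ j ∈ F, c j • eZ j⟫ : ℂ)
      = ∑ i ∈ F, ((‖c i‖ : ℂ)) ^ 2 := by
    rw [sum_inner]
    refine Finset.sum_congr rfl fun i hi => ?_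
    rw [inner_sum]
    rw [Finset.sum_eq_single i]
    · rw [inner_smul_left, inner_smul_right, inner_eZ_eZ, if_pos rfl]
      have : (starRingEnd ℂ) (c i) * c i = (‖c i‖ : ℂ) ^ 2 := by
        rw [mul_comm, Complex.mul_conj]
        norm_cast
        exact Complex.normSq_eq_norm_sq _
      rw [mul_one, this]
    · intro j _ hj
      rw [inner_smul_left, inner_smul_right, inner_eZ_eZ, if_neg (fun h => hj h.symm)]
      ring
    · intro hi'
      exact absurd hi hi'
  have h2 := inner_self_eq_norm_sq (𝕜 := ℂ) (∑ i ∈ F, c i • eZ i)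
  rw [h] at h2
  rw [← h2, map_sum]
  refine Finset.sum_congr rfl fun i _ => ?_
  rw [show ((‖c i‖:ℂ)) ^ 2 = ((‖c i‖^2 : ℝ) : ℂ) by push_cast; ring]
  exact Complex.ofReal_re _

end S12
namespace S12

lemma sum_shift (f : ℤ → ℝ) (a b k : ℤ) :
    ∑ i ∈ Finset.Icc a b, f (i + k) = ∑ i ∈ Finset.Icc (a + k) (b + k), f i := by
  rw [← Finset.map_add_right_Icc, Finset.sum_map]
  rfl

lemma conj_cross_re (u v E : ℂ) :
    ((starRingEnd ℂ) u * v * (starRingEnd ℂ) E).re = ((starRingEnd ℂ) v * u * E).re := by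
  rw [show (starRingEnd ℂ) u * v * (starRingEnd ℂ) E
      = (starRingEnd ℂ) ((starRingEnd ℂ) v * u * E) by
    simp only [map_mul, Complex.conj_conj]; ring]
  exact Complex.conj_re _

lemma conj_self_re (u E : ℂ) :
    ((starRingEnd ℂ) u * u * E).re = E.re * ‖u‖ ^ 2 := by
  rw [show (starRingEnd ℂ) u * u = ((‖u‖ ^ 2 : ℝ) : ℂ) by
    rw [mul_comm, Complex.mul_conj]
    norm_cast
    exact Complex.normSq_eq_norm_sq _]
  rw [Complex.re_ofReal_mul]
  ring

lemma quad_re (A : HZ →L[ℂ] HZ) (htri : ∀ i j : ℤ, 1 < |i - j| → entry A i j = 0)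
    (m n : ℤ) (c : ℤ → ℂ) (hc : ∀ i, i ∉ Finset.Icc m n → c i = 0) :
    (inner ℂ (∑ i ∈ Finset.Icc m n, c i • eZ i) (A (∑ i ∈ Finset.Icc m n, c i • eZ i)) : ℂ).re =
      ∑ i ∈ Finset.Icc m n, ((entry A i i).re * ‖c i‖ ^ 2 +
        ((starRingEnd ℂ) (c i) * c (i + 1) * cc A i).re) := by
  rw [inner_sum_sum]
  have hrow : ∀ i ∈ Finset.Icc m n,
      ∑ j ∈ Finset.Icc m n, (starRingEnd ℂ) (c i) * c j * entry A i j
        = (starRingEnd ℂ) (c i) * c (i-1) * entry A i (i-1)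
          + ((starRingEnd ℂ) (c i) * c i * entry A i i
          + (starRingEnd ℂ) (c i) * c (i+1) * entry A i (i+1)) := by
    intro i hi
    rw [Finset.mem_Icc] at hi
    have hsub : ∑ j ∈ Finset.Icc m n, (starRingEnd ℂ) (c i) * c j * entry A i j
        = ∑ j ∈ Finset.Icc (m-1) (n+1), (starRingEnd ℂ) (c i) * c j * entry A i j :=
      Finset.sum_subset (Finset.Icc_subset_Icc (by omega) (by omega))
        (fun j _ hj => by rw [hc j hj]; ring)
    have htsub : ({i-1, i, i+1} : Finset ℤ) ⊆ Finset.Icc (m-1) (n+1) := by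
      intro j hj
      simp only [Finset.mem_insert, Finset.mem_singleton] at hj
      rw [Finset.mem_Icc]
      omega
    have h3 : ∑ j ∈ ({i-1, i, i+1} : Finset ℤ), (starRingEnd ℂ) (c i) * c j * entry A i j
        = ∑ j ∈ Finset.Icc (m-1) (n+1), (starRingEnd ℂ) (c i) * c j * entry A i j := by
      refine Finset.sum_subset htsub ?_
      intro j _ hj
      simp only [Finset.mem_insert, Finset.mem_singleton, not_or] at hj
      obtain ⟨h1, h2, h3⟩ := hj
      rw [htri i j (by rw [lt_abs]; omega)]
      ring
    have hm1 : (i - 1 : ℤ) ∉ ({i, i+1} : Finset ℤ) := by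
      simp only [Finset.mem_insert, Finset.mem_singleton, not_or]
      omega
    have hm2 : (i : ℤ) ∉ ({i+1} : Finset ℤ) := by
      rw [Finset.mem_singleton]
      omega
    rw [hsub, ← h3, Finset.sum_insert hm1, Finset.sum_insert hm2, Finset.sum_singleton]
  rw [Finset.sum_congr rfl hrow, Complex.re_sum]
  simp only [Complex.add_re]
  rw [Finset.sum_add_distrib, Finset.sum_add_distrib]
  have hre1 : ∑ i ∈ Finset.Icc m n, ((starRingEnd ℂ) (c i) * c (i-1) * entry A i (i-1)).re
      = ∑ i ∈ Finset.Icc m n, ((starRingEnd ℂ) (c (i+1)) * c i * entry A (i+1) i).re := by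
    set g : ℤ → ℝ := fun j => ((starRingEnd ℂ) (c (j+1)) * c j * entry A (j+1) j).re with hg
    have e0 : ∀ i : ℤ, ((starRingEnd ℂ) (c i) * c (i-1) * entry A i (i-1)).re = g (i + (-1)) := by
      intro i
      simp only [hg, show i + (-1) = i - 1 from by ring, sub_add_cancel]
    have e1 : ∑ i ∈ Finset.Icc m n, g (i + (-1))
        = ∑ i ∈ Finset.Icc (m + (-1)) (n + (-1)), g i := sum_shift g m n (-1)
    have e2a : ∑ i ∈ Finset.Icc (m + (-1)) (n + (-1)), g i
        = ∑ i ∈ Finset.Icc (m + (-1)) n, g i := by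
      refine Finset.sum_subset (Finset.Icc_subset_Icc le_rfl (by omega)) ?_
      intro j hj hj'
      rw [Finset.mem_Icc] at hj
      rw [Finset.mem_Icc] at hj'
      have : c (j + 1) = 0 := hc _ (by rw [Finset.mem_Icc]; omega)
      simp [hg, this]
    have e2b : ∑ i ∈ Finset.Icc m n, g i = ∑ i ∈ Finset.Icc (m + (-1)) n, g i := by
      refine Finset.sum_subset (Finset.Icc_subset_Icc (by omega) le_rfl) ?_
      intro j hj hj'
      rw [Finset.mem_Icc] at hj
      rw [Finset.mem_Icc] at hj'
      have : c j = 0 := hc _ (by rw [Finset.mem_Icc]; omega)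
      simp [hg, this]
    calc ∑ i ∈ Finset.Icc m n, ((starRingEnd ℂ) (c i) * c (i-1) * entry A i (i-1)).re
        = ∑ i ∈ Finset.Icc m n, g (i + (-1)) := Finset.sum_congr rfl fun i _ => e0 i
      _ = ∑ i ∈ Finset.Icc (m + (-1)) (n + (-1)), g i := e1
      _ = ∑ i ∈ Finset.Icc (m + (-1)) n, g i := e2a
      _ = ∑ i ∈ Finset.Icc m n, g i := e2b.symm
  rw [hre1, ← Finset.sum_add_distrib, ← Finset.sum_add_distrib]
  refine Finset.sum_congr rfl fun i _ => ?_
  rw [cc]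
  rw [mul_add, Complex.add_re]
  rw [conj_cross_re (c i) (c (i+1)) (entry A (i+1) i)]
  rw [conj_self_re]
  ring

end S12
namespace S12

lemma sum_bound (A : HZ →L[ℂ] HZ) (m n : ℤ) (c : ℤ → ℂ)
    (hc : ∀ i, i ∉ Finset.Icc m n → c i = 0) (Mv : ℝ) (r s : ℤ → ℝ)
    (hr : ∀ i, 0 < r i) (hs : ∀ i, 0 < s i) (hrs : ∀ i, r i * s i = 1)
    (key : ∀ i, (entry A i i).re + ‖cc A i‖ * r i / 2 + ‖cc A (i-1)‖ * s (i-1) / 2 ≤ Mv) :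
    ∑ i ∈ Finset.Icc m n, ((entry A i i).re * ‖c i‖ ^ 2 +
        ((starRingEnd ℂ) (c i) * c (i + 1) * cc A i).re)
      ≤ Mv * ∑ i ∈ Finset.Icc m n, ‖c i‖ ^ 2 := by
  have term : ∀ i : ℤ, ((starRingEnd ℂ) (c i) * c (i + 1) * cc A i).re
      ≤ ‖cc A i‖ * r i / 2 * ‖c i‖^2 + ‖cc A i‖ * s i / 2 * ‖c (i+1)‖^2 := by
    intro i
    have h1 : ((starRingEnd ℂ) (c i) * c (i + 1) * cc A i).re
        ≤ ‖c i‖ * ‖c (i+1)‖ * ‖cc A i‖ := by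
      calc ((starRingEnd ℂ) (c i) * c (i + 1) * cc A i).re
          ≤ ‖(starRingEnd ℂ) (c i) * c (i + 1) * cc A i‖ := Complex.re_le_norm _
        _ = ‖c i‖ * ‖c (i+1)‖ * ‖cc A i‖ := by
            rw [norm_mul, norm_mul, RCLike.norm_conj]
    have e : s i = (r i)⁻¹ := eq_inv_of_mul_eq_one_right (hrs i)
    have hr0 : r i ≠ 0 := ne_of_gt (hr i)
    rw [e]
    have hint := mul_nonneg (norm_nonneg (cc A i))
      (sq_nonneg (r i * ‖c i‖ - ‖c (i+1)‖))
    have h2 : (2 * r i) * (((starRingEnd ℂ) (c i) * c (i + 1) * cc A i).re)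
        ≤ (2 * r i) * (‖c i‖ * ‖c (i+1)‖ * ‖cc A i‖) :=
      mul_le_mul_of_nonneg_left h1 (by linarith [hr i])
    rw [← sub_nonneg]
    have expand : ‖cc A i‖ * r i / 2 * ‖c i‖^2 + ‖cc A i‖ * (r i)⁻¹ / 2 * ‖c (i+1)‖^2
        - ((starRingEnd ℂ) (c i) * c (i + 1) * cc A i).re
        = ((‖cc A i‖ * (r i * ‖c i‖ - ‖c (i+1)‖)^2)
            + ((2 * r i) * (‖c i‖ * ‖c (i+1)‖ * ‖cc A i‖)
              - (2 * r i) * (((starRingEnd ℂ) (c i) * c (i + 1) * cc A i).re)))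
          / (2 * r i) := by
      field_simp
      ring
    rw [expand]
    apply div_nonneg _ (by linarith [hr i])
    have h3 := sub_nonneg.mpr h2
    linarith
  have step1 : ∑ i ∈ Finset.Icc m n, ((entry A i i).re * ‖c i‖ ^ 2 +
        ((starRingEnd ℂ) (c i) * c (i + 1) * cc A i).re)
      ≤ ∑ i ∈ Finset.Icc m n, ((entry A i i).re * ‖c i‖ ^ 2 +
        (‖cc A i‖ * r i / 2 * ‖c i‖^2 + ‖cc A i‖ * s i / 2 * ‖c (i+1)‖^2)) :=
    Finset.sum_le_sum fun i _ => add_le_add le_rfl (term i)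
  set G : ℤ → ℝ := fun j => ‖cc A (j-1)‖ * s (j-1) / 2 * ‖c j‖^2 with hGdef
  have hGnn : ∀ j, 0 ≤ G j := by
    intro j
    have h0 := (hs (j-1)).le
    simp only [hGdef]
    exact mul_nonneg (div_nonneg (mul_nonneg (norm_nonneg _) h0) (by norm_num)) (sq_nonneg _)
  have step2 : ∑ i ∈ Finset.Icc m n, (‖cc A i‖ * s i / 2 * ‖c (i+1)‖^2)
      ≤ ∑ i ∈ Finset.Icc m n, G i := by
    have hG : ∀ i : ℤ, ‖cc A i‖ * s i / 2 * ‖c (i+1)‖^2 = G (i+1) := by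
      intro i
      simp only [hGdef, add_sub_cancel_right]
    calc ∑ i ∈ Finset.Icc m n, (‖cc A i‖ * s i / 2 * ‖c (i+1)‖^2)
        = ∑ i ∈ Finset.Icc m n, G (i+1) := Finset.sum_congr rfl fun i _ => hG i
      _ = ∑ i ∈ Finset.Icc (m+1) (n+1), G i := sum_shift G m n 1
      _ = ∑ i ∈ Finset.Icc (m+1) n, G i := by
          refine (Finset.sum_subset (Finset.Icc_subset_Icc le_rfl (by omega)) ?_).symm
          intro j hj hj'
          rw [Finset.mem_Icc] at hj
          rw [Finset.mem_Icc] at hj'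
          have hcj : c j = 0 := hc j (by rw [Finset.mem_Icc]; omega)
          simp [hGdef, hcj]
      _ ≤ ∑ i ∈ Finset.Icc m n, G i :=
          Finset.sum_le_sum_of_subset_of_nonneg
            (Finset.Icc_subset_Icc (by omega) le_rfl) (fun j _ _ => hGnn j)
  have step3 : ∑ i ∈ Finset.Icc m n, ((entry A i i).re * ‖c i‖ ^ 2 +
        (‖cc A i‖ * r i / 2 * ‖c i‖^2 + ‖cc A i‖ * s i / 2 * ‖c (i+1)‖^2))
      ≤ ∑ i ∈ Finset.Icc m n, ((entry A i i).re * ‖c i‖ ^ 2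
          + ‖cc A i‖ * r i / 2 * ‖c i‖^2 + G i) := by
    have eL : ∑ i ∈ Finset.Icc m n, ((entry A i i).re * ‖c i‖ ^ 2 +
          (‖cc A i‖ * r i / 2 * ‖c i‖^2 + ‖cc A i‖ * s i / 2 * ‖c (i+1)‖^2))
        = (∑ i ∈ Finset.Icc m n, ((entry A i i).re * ‖c i‖ ^ 2
            + ‖cc A i‖ * r i / 2 * ‖c i‖^2))
          + ∑ i ∈ Finset.Icc m n, ‖cc A i‖ * s i / 2 * ‖c (i+1)‖^2 := by
      rw [← Finset.sum_add_distrib]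
      exact Finset.sum_congr rfl fun i _ => by ring
    have eR : ∑ i ∈ Finset.Icc m n, ((entry A i i).re * ‖c i‖ ^ 2
          + ‖cc A i‖ * r i / 2 * ‖c i‖^2 + G i)
        = (∑ i ∈ Finset.Icc m n, ((entry A i i).re * ‖c i‖ ^ 2
            + ‖cc A i‖ * r i / 2 * ‖c i‖^2)) + ∑ i ∈ Finset.Icc m n, G i := by
      rw [← Finset.sum_add_distrib]
    rw [eL, eR]
    exact add_le_add le_rfl step2
  have step4 : ∑ i ∈ Finset.Icc m n, ((entry A i i).re * ‖c i‖ ^ 2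
          + ‖cc A i‖ * r i / 2 * ‖c i‖^2 + G i)
      ≤ ∑ i ∈ Finset.Icc m n, Mv * ‖c i‖^2 := by
    refine Finset.sum_le_sum fun i _ => ?_
    have e : (entry A i i).re * ‖c i‖ ^ 2 + ‖cc A i‖ * r i / 2 * ‖c i‖^2 + G i
        = ((entry A i i).re + ‖cc A i‖ * r i / 2 + ‖cc A (i-1)‖ * s (i-1) / 2) * ‖c i‖^2 := by
      simp only [hGdef]
      ring
    rw [e]
    exact mul_le_mul_of_nonneg_right (key i) (sq_nonneg _)
  rw [← Finset.mul_sum] at step4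
  linarith

lemma quad_global (A : HZ →L[ℂ] HZ) (htri : ∀ i j : ℤ, 1 < |i - j| → entry A i j = 0)
    (Mv : ℝ) (r s : ℤ → ℝ)
    (hr : ∀ i, 0 < r i) (hs : ∀ i, 0 < s i) (hrs : ∀ i, r i * s i = 1)
    (key : ∀ i, (entry A i i).re + ‖cc A i‖ * r i / 2 + ‖cc A (i-1)‖ * s (i-1) / 2 ≤ Mv)
    (x : HZ) : (inner ℂ x (A x) : ℂ).re ≤ Mv * ‖x‖^2 := by
  set y : ℕ → HZ := fun k => ∑ i ∈ Finset.Icc (-(k:ℤ)) (k:ℤ), x i • eZ i with hy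
  have bound : ∀ k : ℕ, (inner ℂ (y k) (A (y k)) : ℂ).re ≤ Mv * ‖y k‖^2 := by
    intro k
    set c : ℤ → ℂ := fun i => if i ∈ Finset.Icc (-(k:ℤ)) (k:ℤ) then x i else 0 with hcdef
    have hc : ∀ i, i ∉ Finset.Icc (-(k:ℤ)) (k:ℤ) → c i = 0 := by
      intro i hi
      simp only [hcdef, if_neg hi]
    have hyc : y k = ∑ i ∈ Finset.Icc (-(k:ℤ)) (k:ℤ), c i • eZ i := by
      refine Finset.sum_congr rfl fun i hi => ?_
      simp only [hcdef, if_pos hi]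
    rw [hyc, quad_re A htri _ _ c hc, show ‖∑ i ∈ Finset.Icc (-(k:ℤ)) (k:ℤ), c i • eZ i‖^2
      = ∑ i ∈ Finset.Icc (-(k:ℤ)) (k:ℤ), ‖c i‖^2 from norm_sq_sum _ _]
    exact sum_bound A _ _ c hc Mv r s hr hs hrs key
  have hsingle : ∀ i : ℤ, lp.single 2 i (x i) = x i • eZ i := by
    intro i
    rw [eZ, ← lp.single_smul]
    congr 1
    simp
  have hsum : HasSum (fun i : ℤ => x i • eZ i) x := by
    have h := lp.hasSum_single (E := fun _ : ℤ => ℂ) (p := 2) (by norm_num) x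
    simpa only [hsingle] using h
  have hmono : Monotone (fun k : ℕ => Finset.Icc (-(k:ℤ)) (k:ℤ)) := by
    intro a b hab
    apply Finset.Icc_subset_Icc <;> omega
  have hexh : ∀ i : ℤ, ∃ k : ℕ, i ∈ Finset.Icc (-(k:ℤ)) (k:ℤ) := by
    intro i
    exact ⟨i.natAbs, by rw [Finset.mem_Icc]; omega⟩
  have hconv : Tendsto y atTop (𝓝 x) :=
    hsum.comp (tendsto_atTop_finset_of_monotone hmono hexh)
  have Fcont : Continuous (fun z : HZ => (inner ℂ z (A z) : ℂ).re) :=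
    Complex.continuous_re.comp (continuous_id.inner A.continuous)
  have Gcont : Continuous (fun z : HZ => Mv * ‖z‖^2) :=
    continuous_const.mul ((continuous_norm).pow 2)
  have hc1 : Tendsto (fun k => (inner ℂ (y k) (A (y k)) : ℂ).re) atTop
      (𝓝 ((inner ℂ x (A x) : ℂ).re)) := (Fcont.tendsto x).comp hconv
  have hc2 : Tendsto (fun k => Mv * ‖y k‖^2) atTop (𝓝 (Mv * ‖x‖^2)) :=
    (Gcont.tendsto x).comp hconv
  exact le_of_tendsto_of_tendsto' hc1 hc2 bound

end S12
namespace S12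

lemma shift2 (A : HZ →L[ℂ] HZ) (hper : ∀ i j : ℤ, entry A (i + 2) (j + 2) = entry A i j)
    (k : ℤ) : ∀ i j : ℤ, entry A (i + 2*k) (j + 2*k) = entry A i j := by
  induction k using Int.induction_on with
  | zero => simp
  | succ k ih =>
      intro i j
      rw [show i + 2*((k:ℤ)+1) = (i + 2*k) + 2 by ring,
        show j + 2*((k:ℤ)+1) = (j + 2*k) + 2 by ring, hper, ih]
  | pred k ih =>
      intro i j
      have h := hper (i + 2*(-(k:ℤ)-1)) (j + 2*(-(k:ℤ)-1))
      rw [show i + 2*(-(k:ℤ)-1) + 2 = i + 2*(-(k:ℤ)) by ring,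
        show j + 2*(-(k:ℤ)-1) + 2 = j + 2*(-(k:ℤ)) by ring, ih] at h
      rw [← h]

lemma entry_shift (A : HZ →L[ℂ] HZ) (hper : ∀ i j : ℤ, entry A (i + 2) (j + 2) = entry A i j)
    {i j i' j' : ℤ} (k : ℤ) (hi : i = i' + 2*k) (hj : j = j' + 2*k) :
    entry A i j = entry A i' j' := by
  rw [hi, hj, shift2 A hper k]

lemma diag_odd (A : HZ →L[ℂ] HZ) (hper : ∀ i j : ℤ, entry A (i + 2) (j + 2) = entry A i j)
    {i : ℤ} (h : Odd i) : entry A i i = entry A 1 1 := by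
  obtain ⟨k, hk⟩ := h
  exact entry_shift A hper k (by omega) (by omega)

lemma diag_even (A : HZ →L[ℂ] HZ) (hper : ∀ i j : ℤ, entry A (i + 2) (j + 2) = entry A i j)
    {i : ℤ} (h : Even i) : entry A i i = entry A 2 2 := by
  obtain ⟨k, hk⟩ := h
  exact entry_shift A hper (k-1) (by omega) (by omega)

lemma cc_odd (A : HZ →L[ℂ] HZ) (hper : ∀ i j : ℤ, entry A (i + 2) (j + 2) = entry A i j)
    {i : ℤ} (h : Odd i) : cc A i = cc A 1 := by
  obtain ⟨k, hk⟩ := h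
  have e1 : entry A i (i+1) = entry A 1 (1+1) := entry_shift A hper k (by omega) (by omega)
  have e2 : entry A (i+1) i = entry A (1+1) 1 := entry_shift A hper k (by omega) (by omega)
  rw [cc, cc, e1, e2]

lemma cc_even (A : HZ →L[ℂ] HZ) (hper : ∀ i j : ℤ, entry A (i + 2) (j + 2) = entry A i j)
    {i : ℤ} (h : Even i) : cc A i = cc A 2 := by
  obtain ⟨k, hk⟩ := h
  have e1 : entry A i (i+1) = entry A 2 (2+1) := entry_shift A hper (k-1) (by omega) (by omega)
  have e2 : entry A (i+1) i = entry A (2+1) 2 := entry_shift A hper (k-1) (by omega) (by omega)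
  rw [cc, cc, e1, e2]

lemma iSup_diag (A : HZ →L[ℂ] HZ) (hper : ∀ i j : ℤ, entry A (i + 2) (j + 2) = entry A i j) :
    (⨆ i : ℤ, (entry A i i).re) = max (entry A 1 1).re (entry A 2 2).re := by
  have hb : ∀ i : ℤ, (entry A i i).re ≤ max (entry A 1 1).re (entry A 2 2).re := by
    intro i
    rcases Int.even_or_odd i with he | ho
    · rw [diag_even A hper he]; exact le_max_right _ _
    · rw [diag_odd A hper ho]; exact le_max_left _ _
  have hbdd : BddAbove (Set.range fun i : ℤ => (entry A i i).re) := by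
    refine ⟨max (entry A 1 1).re (entry A 2 2).re, ?_⟩
    rintro z ⟨i, rfl⟩
    exact hb i
  apply le_antisymm
  · exact ciSup_le hb
  · apply max_le
    · have := le_ciSup hbdd (1 : ℤ); exact this
    · have := le_ciSup hbdd (2 : ℤ); exact this

lemma entry_add_adjoint (A : HZ →L[ℂ] HZ) (i j : ℤ) :
    entry (A + ContinuousLinearMap.adjoint A) i j
      = entry A i j + (starRingEnd ℂ) (entry A j i) := by
  rw [entry, ContinuousLinearMap.add_apply, inner_add_right, entry, entry]
  congr 1
  rw [ContinuousLinearMap.adjoint_inner_right, ← inner_conj_symm]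

lemma cc_ne (A : HZ →L[ℂ] HZ) (htri : ∀ i j : ℤ, 1 < |i - j| → entry A i j = 0)
    (hper : ∀ i j : ℤ, entry A (i + 2) (j + 2) = entry A i j)
    (hnd : ¬ ∀ i j : ℤ, i ≠ j → entry (A + ContinuousLinearMap.adjoint A) i j = 0) :
    cc A 1 ≠ 0 ∨ cc A 2 ≠ 0 := by
  by_contra h
  push_neg at h
  obtain ⟨h1, h2⟩ := h
  apply hnd
  intro i j hij
  have hcc : ∀ k : ℤ, cc A k = 0 := by
    intro k
    rcases Int.even_or_odd k with he | ho
    · rw [cc_even A hper he]; exact h2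
    · rw [cc_odd A hper ho]; exact h1
  rw [entry_add_adjoint]
  by_cases hj : j = i + 1
  · subst hj
    exact hcc i
  · by_cases hi : i = j + 1
    · subst hi
      have := hcc j
      rw [cc] at this
      have h3 : entry A j (j+1) = - (starRingEnd ℂ) (entry A (j+1) j) := by
        linear_combination this
      rw [h3]
      simp
    · rw [htri i j (by rw [lt_abs]; omega), htri j i (by rw [lt_abs]; omega)]
      simp

/-- `sg z` is the unit number with `sg z * z = ‖z‖`. -/
def sg (z : ℂ) : ℂ := if z = 0 then 1 else (starRingEnd ℂ) z / ‖z‖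

lemma sg_norm (z : ℂ) : ‖sg z‖ = 1 := by
  rw [sg]
  split
  · simp
  · rename_i h
    rw [norm_div, RCLike.norm_conj]
    simp only [Complex.norm_real, norm_norm]
    rw [div_self (norm_ne_zero_iff.mpr h)]

lemma sg_mul (z : ℂ) : sg z * z = (‖z‖ : ℂ) := by
  rw [sg]
  split
  · rename_i h; simp [h]
  · rename_i h
    have ha : ((‖z‖:ℝ) : ℂ) ≠ 0 := by
      norm_cast
      exact norm_ne_zero_iff.mpr h
    rw [div_mul_eq_mul_div, mul_comm, Complex.mul_conj, Complex.normSq_eq_norm_sq]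
    push_cast
    rw [sq, mul_div_assoc, div_self ha, mul_one]

/-- phase function -/
def th (p q : ℂ) (j : ℤ) : ℂ :=
  if Odd j then (p*q)^((j-1)/2) else p * (p*q)^((j-2)/2)

lemma th_norm (p q : ℂ) (hp : ‖p‖ = 1) (hq : ‖q‖ = 1) (j : ℤ) : ‖th p q j‖ = 1 := by
  rw [th]
  split
  · rw [norm_zpow, norm_mul, hp, hq]
    norm_num
  · rw [norm_mul, norm_zpow, norm_mul, hp, hq]
    norm_num

lemma conj_zpow_self (z : ℂ) (hz : ‖z‖ = 1) (k : ℤ) :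
    (starRingEnd ℂ) (z ^ k) * z ^ k = 1 := by
  rw [mul_comm, Complex.mul_conj, Complex.normSq_eq_norm_sq]
  rw [norm_zpow, hz]
  norm_num

lemma th_odd (p q : ℂ) (hp : ‖p‖ = 1) (hq : ‖q‖ = 1) {j : ℤ} (h : Odd j) :
    (starRingEnd ℂ) (th p q j) * th p q (j+1) = p := by
  have hoj : Odd j := h
  have hej : ¬ Odd (j+1) := by
    rw [Int.odd_iff] at hoj ⊢
    omega
  rw [th, th, if_pos hoj, if_neg hej, show j + 1 - 2 = j - 1 by ring]
  calc (starRingEnd ℂ) ((p*q) ^ ((j-1)/2)) * (p * (p*q) ^ ((j-1)/2))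
      = p * ((starRingEnd ℂ) ((p*q) ^ ((j-1)/2)) * (p*q) ^ ((j-1)/2)) := by ring
    _ = p := by
        rw [conj_zpow_self (p*q) (by rw [norm_mul, hp, hq]; norm_num), mul_one]

lemma th_even (p q : ℂ) (hp : ‖p‖ = 1) (hq : ‖q‖ = 1) {j : ℤ} (h : ¬ Odd j) :
    (starRingEnd ℂ) (th p q j) * th p q (j+1) = q := by
  have hoj1 : Odd (j+1) := by
    rw [Int.odd_iff] at h ⊢
    omega
  have hk : (j + 1 - 1)/2 = (j-2)/2 + 1 := by
    rw [Int.odd_iff] at h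
    omega
  have hpq : p * q ≠ 0 := by
    intro h0
    have h1 : ‖p * q‖ = 1 := by rw [norm_mul, hp, hq]; norm_num
    rw [h0] at h1
    simp at h1
  rw [th, th, if_neg h, if_pos hoj1, hk, zpow_add_one₀ hpq, map_mul]
  calc (starRingEnd ℂ) p * (starRingEnd ℂ) ((p*q) ^ ((j-2)/2)) * ((p*q) ^ ((j-2)/2) * (p*q))
      = ((starRingEnd ℂ) p * p) * q *
          ((starRingEnd ℂ) ((p*q) ^ ((j-2)/2)) * (p*q) ^ ((j-2)/2)) := by ring
    _ = q := by
        rw [conj_zpow_self (p*q) (by rw [norm_mul, hp, hq]; norm_num), mul_one,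
          mul_comm ((starRingEnd ℂ) p) p, Complex.mul_conj, Complex.normSq_eq_norm_sq, hp]
        norm_num

lemma Icc_step (a b : ℤ) (h : a ≤ b + 1) :
    Finset.Icc a (b+1) = insert (b+1) (Finset.Icc a b) := by
  ext x
  simp only [Finset.mem_Icc, Finset.mem_insert]
  omega

lemma parity_sum (x y : ℝ) : ∀ n : ℕ,
    ∑ i ∈ Finset.Icc (1:ℤ) (2*n), (if Odd i then x else y) = n * (x + y) := by
  intro n
  induction n with
  | zero => rw [Finset.Icc_eq_empty (by norm_num)]; simp
  | succ n ih =>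
      have h2 : (2*((n:ℤ)+1)) = (2*(n:ℤ) + 1) + 1 := by ring
      push_cast
      rw [h2, Icc_step _ _ (by omega), Finset.sum_insert (by rw [Finset.mem_Icc]; omega),
        Icc_step _ _ (by omega), Finset.sum_insert (by rw [Finset.mem_Icc]; omega), ih,
        if_neg (by rw [Int.odd_iff]; omega), if_pos (by rw [Int.odd_iff]; omega)]
      push_cast
      ring

lemma parity_sum_odd (x y : ℝ) : ∀ n : ℕ,
    ∑ i ∈ Finset.Icc (1:ℤ) (2*n+1), (if Odd i then x else y) = (n+1) * x + n * y := by
  intro n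
  induction n with
  | zero =>
      norm_num
  | succ n ih =>
      have h2 : (2*((n:ℤ)+1) + 1) = (2*(n:ℤ) + 1 + 1) + 1 := by ring
      push_cast
      rw [h2, Icc_step _ _ (by omega), Finset.sum_insert (by rw [Finset.mem_Icc]; omega),
        Icc_step _ _ (by omega), Finset.sum_insert (by rw [Finset.mem_Icc]; omega), ih,
        if_pos (by rw [Int.odd_iff]; omega), if_neg (by rw [Int.odd_iff]; omega)]
      push_cast
      ring

end S12
namespace S12

lemma key_ineq (a1 a2 β1 β2 S : ℝ) (hβ1 : 0 ≤ β1) (hβ2 : 0 ≤ β2) (hT : 0 < β1 + β2)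
    (hSnn : 0 ≤ S) (hS : S^2 = ((a1-a2)/2)^2 + ((β1+β2)/2)^2) :
    ∃ ρ : ℝ, 0 < ρ ∧
      a1 + β1 * ρ / 2 + β2 * ρ / 2 = (a1+a2)/2 + S ∧
      a2 + β2 * ρ⁻¹ / 2 + β1 * ρ⁻¹ / 2 = (a1+a2)/2 + S := by
  set δ : ℝ := (a1-a2)/2 with hδ
  set T : ℝ := (β1+β2)/2 with hTd
  have hT2 : 0 < T := by rw [hTd]; linarith
  have hw : 0 < S - δ := by nlinarith [hS, hSnn, sq_nonneg (S + δ), sq_nonneg (S - δ)]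
  refine ⟨(S - δ)/T, div_pos hw hT2, ?_, ?_⟩
  · rw [hδ, hTd]
    field_simp
    ring
  · rw [inv_div]
    field_simp
    rw [hδ, hTd] at hS ⊢
    nlinarith [hS]

lemma eigen_id (a1 a2 β1 β2 S : ℝ)
    (hS : S^2 = ((a1-a2)/2)^2 + ((β1+β2)/2)^2) :
    a1*((β1+β2)/2)^2 + a2*(S - (a1-a2)/2)^2 + (β1+β2)*(((β1+β2)/2)*(S-(a1-a2)/2))
      = ((a1+a2)/2 + S)*(((β1+β2)/2)^2 + (S-(a1-a2)/2)^2) := by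
  linear_combination (-(S - (a1-a2)/2)) * hS

end S12
namespace S12

set_option maxHeartbeats 2000000 in
set_option maxRecDepth 8000 in
lemma r0_eq (A : HZ →L[ℂ] HZ)
    (htri : ∀ i j : ℤ, 1 < |i - j| → entry A i j = 0)
    (hper : ∀ i j : ℤ, entry A (i + 2) (j + 2) = entry A i j)
    (hcc : cc A 1 ≠ 0 ∨ cc A 2 ≠ 0) :
    r0 A = ((entry A 1 1).re + (entry A 2 2).re)/2 +
      Real.sqrt ((((entry A 1 1).re - (entry A 2 2).re)/2)^2
        + ((‖cc A 1‖ + ‖cc A 2‖)/2)^2) := by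
  set a1 : ℝ := (entry A 1 1).re with ha1
  set a2 : ℝ := (entry A 2 2).re with ha2
  set β1 : ℝ := ‖cc A 1‖ with hb1
  set β2 : ℝ := ‖cc A 2‖ with hb2
  have hβ1 : 0 ≤ β1 := norm_nonneg _
  have hβ2 : 0 ≤ β2 := norm_nonneg _
  have hT : 0 < β1 + β2 := by
    rcases hcc with h | h
    · have h1 : 0 < β1 := by rw [hb1]; exact norm_pos_iff.mpr h
      linarith
    · have h1 : 0 < β2 := by rw [hb2]; exact norm_pos_iff.mpr h
      linarith
  set S : ℝ := Real.sqrt (((a1-a2)/2)^2 + ((β1+β2)/2)^2) with hSdef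
  have hSnn : 0 ≤ S := Real.sqrt_nonneg _
  have hS : S^2 = ((a1-a2)/2)^2 + ((β1+β2)/2)^2 := Real.sq_sqrt (by positivity)
  set Mv : ℝ := (a1+a2)/2 + S with hMv
  obtain ⟨ρ, hρ, keyodd, keyeven⟩ := key_ineq a1 a2 β1 β2 S hβ1 hβ2 hT hSnn hS
  clear_value a1 a2 β1 β2 S Mv
  set rf : ℤ → ℝ := fun i => if Odd i then ρ else ρ⁻¹ with hrf
  set sf : ℤ → ℝ := fun i => if Odd i then ρ⁻¹ else ρ with hsf
  have hrpos : ∀ i, 0 < rf i := by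
    intro i
    rw [hrf]
    dsimp only
    split
    · exact hρ
    · exact inv_pos.mpr hρ
  have hspos : ∀ i, 0 < sf i := by
    intro i
    rw [hsf]
    dsimp only
    split
    · exact inv_pos.mpr hρ
    · exact hρ
  have hrs : ∀ i, rf i * sf i = 1 := by
    intro i
    rw [hrf, hsf]
    dsimp only
    by_cases hoi : Odd i
    · rw [if_pos hoi, if_pos hoi]
      exact mul_inv_cancel₀ (ne_of_gt hρ)
    · rw [if_neg hoi, if_neg hoi]
      exact inv_mul_cancel₀ (ne_of_gt hρ)
  have key : ∀ i : ℤ, (entry A i i).re + ‖cc A i‖ * rf i / 2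
      + ‖cc A (i-1)‖ * sf (i-1) / 2 ≤ Mv := by
    intro i
    by_cases hoi : Odd i
    · have hei : ¬ Odd (i-1) := by rw [Int.odd_iff] at hoi ⊢; omega
      rw [diag_odd A hper hoi, cc_odd A hper hoi,
        cc_even A hper (Int.not_odd_iff_even.mp hei), hrf, hsf]
      dsimp only
      rw [if_pos hoi, if_neg hei, ← ha1, ← hb1, ← hb2]
      linarith [keyodd]
    · have hei : Odd (i-1) := by rw [Int.odd_iff] at hoi ⊢; omega
      rw [diag_even A hper (Int.not_odd_iff_even.mp hoi), cc_even A hper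
        (Int.not_odd_iff_even.mp hoi), cc_odd A hper hei, hrf, hsf]
      dsimp only
      rw [if_neg hoi, if_pos hei, ← ha2, ← hb1, ← hb2]
      linarith [keyeven]
  have hub : ∀ z ∈ numRange A, z.re ≤ Mv := by
    intro z hz
    have hsub : {z : ℂ | ∃ x : HZ, ‖x‖ = 1 ∧ (inner ℂ x (A x) : ℂ) = z}
        ⊆ {z : ℂ | z.re ≤ Mv} := by
      rintro w ⟨x, hx, rfl⟩
      have hq := quad_global A htri Mv rf sf hrpos hspos hrs key x
      rw [hx] at hq
      simpa using hq
    have hcl : IsClosed {z : ℂ | z.re ≤ Mv} :=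
      IsClosed.preimage Complex.continuous_re isClosed_Iic
    exact (closure_minimal hsub hcl) hz
  -- lower bound data
  set u : ℝ := (β1+β2)/2 with hu
  set v : ℝ := S - (a1-a2)/2 with hv
  have hupos : 0 < u := by rw [hu]; linarith
  have hvpos : 0 < v := by
    rw [hv]
    nlinarith [hS, hSnn, sq_nonneg (S + (a1-a2)/2), sq_nonneg (S - (a1-a2)/2), hT]
  clear_value u v
  have heigen : a1*u^2 + a2*v^2 + (β1+β2)*(u*v) = Mv*(u^2+v^2) := by
    have hS' : S^2 = ((a1-a2)/2)^2 + ((β1+β2)/2)^2 := by rw [hu] at hS; exact hS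
    rw [hu, hv, hMv]
    linear_combination eigen_id a1 a2 β1 β2 S hS'
  set p : ℂ := sg (cc A 1) with hpd
  set q : ℂ := sg (cc A 2) with hqd
  have hpn : ‖p‖ = 1 := sg_norm _
  have hqn : ‖q‖ = 1 := sg_norm _
  have hp_cc : ∀ i : ℤ, Odd i → p * cc A i = ((β1 : ℝ) : ℂ) := by
    intro i hoi
    rw [cc_odd A hper hoi, hpd, sg_mul, hb1]
  have hq_cc : ∀ i : ℤ, ¬ Odd i → q * cc A i = ((β2 : ℝ) : ℂ) := by
    intro i hoi
    rw [cc_even A hper (Int.not_odd_iff_even.mp hoi), hqd, sg_mul, hb2]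
  have hmem : ∀ n : ℕ,
      Mv - (β2*(u*v)/(u^2+v^2))/((n:ℝ)+1) ∈ Complex.re '' numRange A := by
    intro n
    set L : ℤ := 2*((n:ℤ)+1) with hL
    set c : ℤ → ℂ := fun i => if i ∈ Finset.Icc (1:ℤ) L
        then th p q i * (((if Odd i then u else v) : ℝ) : ℂ) else 0 with hcd
    have hc : ∀ i, i ∉ Finset.Icc (1:ℤ) L → c i = 0 := by
      intro i hi
      rw [hcd]
      exact if_neg hi
    set x : HZ := ∑ i ∈ Finset.Icc (1:ℤ) L, c i • eZ i with hxd
    have hcsq : ∀ i ∈ Finset.Icc (1:ℤ) L, ‖c i‖^2 = (if Odd i then u^2 else v^2) := by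
      intro i hi
      have hni : ‖c i‖ = (if Odd i then u else v) := by
        rw [hcd]
        dsimp only
        rw [if_pos hi, norm_mul, th_norm p q hpn hqn, one_mul, Complex.norm_real]
        split
        · exact abs_of_pos hupos
        · exact abs_of_pos hvpos
      rw [hni]
      split <;> rfl
    have hnormsq : ‖x‖^2 = ((n:ℝ)+1)*(u^2+v^2) := by
      rw [hxd, norm_sq_sum, Finset.sum_congr rfl hcsq]
      have hps := parity_sum (u^2) (v^2) (n+1)
      push_cast at hps ⊢
      rw [hL]
      push_cast
      exact hps
    have hq1 : (inner ℂ x (A x) : ℂ).re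
        = ∑ i ∈ Finset.Icc (1:ℤ) L, ((entry A i i).re * ‖c i‖^2)
          + ∑ i ∈ Finset.Icc (1:ℤ) L, ((starRingEnd ℂ) (c i) * c (i+1) * cc A i).re := by
      rw [hxd, quad_re A htri 1 L c hc, Finset.sum_add_distrib]
    have hD : ∑ i ∈ Finset.Icc (1:ℤ) L, ((entry A i i).re * ‖c i‖^2)
        = ((n:ℝ)+1)*(a1*u^2 + a2*v^2) := by
      have he : ∀ i ∈ Finset.Icc (1:ℤ) L, (entry A i i).re * ‖c i‖^2
          = (if Odd i then a1*u^2 else a2*v^2) := by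
        intro i hi
        rw [hcsq i hi]
        by_cases hoi : Odd i
        · rw [if_pos hoi, if_pos hoi, diag_odd A hper hoi, ← ha1]
        · rw [if_neg hoi, if_neg hoi, diag_even A hper (Int.not_odd_iff_even.mp hoi), ← ha2]
      rw [Finset.sum_congr rfl he]
      have hps := parity_sum (a1*u^2) (a2*v^2) (n+1)
      push_cast at hps ⊢
      rw [hL]
      push_cast
      exact hps
    have hX : ∑ i ∈ Finset.Icc (1:ℤ) L, ((starRingEnd ℂ) (c i) * c (i+1) * cc A i).re
        = ((n:ℝ)+1)*(β1*(u*v)) + (n:ℝ)*(β2*(u*v)) := by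
      have hstep : Finset.Icc (1:ℤ) L = insert L (Finset.Icc (1:ℤ) (2*(n:ℤ)+1)) := by
        rw [hL, show 2*((n:ℤ)+1) = (2*(n:ℤ)+1) + 1 by ring]
        exact Icc_step _ _ (by omega)
      have hLnot : L ∉ Finset.Icc (1:ℤ) (2*(n:ℤ)+1) := by
        rw [Finset.mem_Icc, hL]
        omega
      have hcL1 : c (L+1) = 0 := hc _ (by rw [Finset.mem_Icc]; omega)
      have hzero : ((starRingEnd ℂ) (c L) * c (L+1) * cc A L).re = 0 := by
        rw [hcL1]
        simp
      rw [hstep, Finset.sum_insert hLnot, hzero, zero_add]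
      have he : ∀ i ∈ Finset.Icc (1:ℤ) (2*(n:ℤ)+1),
          ((starRingEnd ℂ) (c i) * c (i+1) * cc A i).re
            = (if Odd i then β1*(u*v) else β2*(u*v)) := by
        intro i hi
        rw [Finset.mem_Icc] at hi
        have hiw : i ∈ Finset.Icc (1:ℤ) L := by rw [Finset.mem_Icc, hL]; omega
        have hi1w : i+1 ∈ Finset.Icc (1:ℤ) L := by rw [Finset.mem_Icc, hL]; omega
        rw [hcd]
        dsimp only
        rw [if_pos hiw, if_pos hi1w]
        by_cases hoi : Odd i
        · have hei1 : ¬ Odd (i+1) := by rw [Int.odd_iff] at hoi ⊢; omega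
          rw [if_pos hoi, if_neg hei1, if_pos hoi]
          have hval : (starRingEnd ℂ) (th p q i * (u:ℝ)) * (th p q (i+1) * (v:ℝ)) * cc A i
              = ((β1*(u*v) : ℝ) : ℂ) := by
            rw [map_mul, Complex.conj_ofReal,
              show (starRingEnd ℂ) (th p q i) * (u:ℝ) * (th p q (i+1) * (v:ℝ)) * cc A i
                = ((u:ℝ) * (v:ℝ)) * (((starRingEnd ℂ) (th p q i) * th p q (i+1)) * cc A i)
                from by ring,
              th_odd p q hpn hqn hoi, hp_cc i hoi]
            push_cast
            ring
          rw [hval, Complex.ofReal_re]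
        · have hei1 : Odd (i+1) := by rw [Int.odd_iff] at hoi ⊢; omega
          rw [if_neg hoi, if_pos hei1, if_neg hoi]
          have hval : (starRingEnd ℂ) (th p q i * (v:ℝ)) * (th p q (i+1) * (u:ℝ)) * cc A i
              = ((β2*(u*v) : ℝ) : ℂ) := by
            rw [map_mul, Complex.conj_ofReal,
              show (starRingEnd ℂ) (th p q i) * (v:ℝ) * (th p q (i+1) * (u:ℝ)) * cc A i
                = ((v:ℝ) * (u:ℝ)) * (((starRingEnd ℂ) (th p q i) * th p q (i+1)) * cc A i)
                from by ring,
              th_even p q hpn hqn hoi, hq_cc i hoi]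
            push_cast
            ring
          rw [hval, Complex.ofReal_re]
      rw [Finset.sum_congr rfl he]
      have hps := parity_sum_odd (β1*(u*v)) (β2*(u*v)) n
      push_cast at hps ⊢
      exact hps
    rw [hD, hX] at hq1
    have hxpos : 0 < ‖x‖ := by
      have h2 : 0 < ‖x‖^2 := by rw [hnormsq]; positivity
      nlinarith [norm_nonneg x]
    set k : ℂ := ((‖x‖ : ℝ) : ℂ)⁻¹ with hk
    set y : HZ := k • x with hyd
    have hyn : ‖y‖ = 1 := by
      rw [hyd, norm_smul, hk, norm_inv, Complex.norm_real, Real.norm_eq_abs,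
        abs_of_pos hxpos]
      exact inv_mul_cancel₀ (ne_of_gt hxpos)
    have hyval : (inner ℂ y (A y) : ℂ) = (((‖x‖^2)⁻¹ : ℝ) : ℂ) * (inner ℂ x (A x) : ℂ) := by
      rw [hyd, ContinuousLinearMap.map_smul, inner_smul_left, inner_smul_right, hk,
        map_inv₀, Complex.conj_ofReal]
      push_cast
      ring
    have hyre : (inner ℂ y (A y) : ℂ).re = (‖x‖^2)⁻¹ * ((inner ℂ x (A x) : ℂ).re) := by
      rw [hyval, Complex.re_ofReal_mul]
    refine ⟨(inner ℂ y (A y) : ℂ), subset_closure ⟨y, hyn, rfl⟩, ?_⟩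
    rw [hyre, hq1, hnormsq]
    have hNpos : (0:ℝ) < ((n:ℝ)+1)*(u^2+v^2) := by positivity
    have huv : (0:ℝ) < u^2+v^2 := by positivity
    field_simp
    first
    | linear_combination (((n:ℝ)+1)) * heigen
    | linear_combination (-(((n:ℝ)+1))) * heigen
    | linear_combination heigen
    | linear_combination (-(1:ℝ)) * heigen
    | linear_combination (((n:ℝ)+1)^2) * heigen
    | linear_combination (-(((n:ℝ)+1)^2)) * heigen
    | linear_combination ((u^2+v^2)) * heigen
    | linear_combination (((n:ℝ)+1)*(u^2+v^2)) * heigen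
    | linear_combination (-(((n:ℝ)+1)*(u^2+v^2))) * heigen
    | linear_combination (((n:ℝ)+1)^2*(u^2+v^2)) * heigen
    | linear_combination (-(((n:ℝ)+1)^2*(u^2+v^2))) * heigen
  have hbdd : BddAbove (Complex.re '' numRange A) := by
    refine ⟨Mv, ?_⟩
    rintro t ⟨z, hz, rfl⟩
    exact hub z hz
  have hne : (Complex.re '' numRange A).Nonempty := ⟨_, hmem 0⟩
  rw [r0]
  apply le_antisymm
  · refine csSup_le hne ?_
    rintro t ⟨z, hz, rfl⟩
    exact hub z hz
  · have h0 : Tendsto (fun nn : ℕ => ((nn:ℝ)+1)) atTop atTop :=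
      tendsto_atTop_add_const_right atTop 1 tendsto_natCast_atTop_atTop
    have h1 : Tendsto (fun nn : ℕ => ((nn:ℝ)+1)⁻¹) atTop (𝓝 0) :=
      h0.inv_tendsto_atTop
    have h2 : Tendsto (fun nn : ℕ => Mv - (β2*(u*v)/(u^2+v^2))/((nn:ℝ)+1)) atTop (𝓝 Mv) := by
      have h3 := (h1.const_mul (β2*(u*v)/(u^2+v^2))).const_sub Mv
      simp only [mul_zero, sub_zero] at h3
      exact h3.congr (fun nn => by rw [← div_eq_mul_inv])
    exact le_of_tendsto h2 (Filter.Eventually.of_forall fun nn => le_csSup hbdd (hmem nn))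

end S12
namespace S12

lemma final_algebra (a1 a2 β1 β2 ν : ℝ) (hβ1 : 0 ≤ β1) (hβ2 : 0 ≤ β2)
    (hT : 0 < β1 + β2) (h1 : a1 < ν) (h2 : a2 < ν) :
    (Real.sqrt (β1^2 / (4*(ν-a1)*(ν-a2))) + Real.sqrt (β2^2 / (4*(ν-a2)*(ν-a1))) = 1)
      ↔ ν = (a1+a2)/2 + Real.sqrt (((a1-a2)/2)^2 + ((β1+β2)/2)^2) := by
  have hP : 0 < ν - a1 := by linarith
  have hQ : 0 < ν - a2 := by linarith
  have hPQ : 0 < (ν-a1)*(ν-a2) := mul_pos hP hQ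
  have hsq : Real.sqrt (4*(ν-a1)*(ν-a2)) = 2*Real.sqrt ((ν-a1)*(ν-a2)) := by
    rw [show 4*(ν-a1)*(ν-a2) = 2^2*((ν-a1)*(ν-a2)) by ring,
      Real.sqrt_mul (by positivity), Real.sqrt_sq (by norm_num)]
  have e1 : Real.sqrt (β1^2/(4*(ν-a1)*(ν-a2)))
      = β1/(2*Real.sqrt ((ν-a1)*(ν-a2))) := by
    rw [Real.sqrt_div (sq_nonneg β1), Real.sqrt_sq hβ1, hsq]
  have e2 : Real.sqrt (β2^2/(4*(ν-a2)*(ν-a1)))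
      = β2/(2*Real.sqrt ((ν-a1)*(ν-a2))) := by
    rw [show 4*(ν-a2)*(ν-a1) = 4*(ν-a1)*(ν-a2) by ring,
      Real.sqrt_div (sq_nonneg β2), Real.sqrt_sq hβ2, hsq]
  set R : ℝ := Real.sqrt ((ν-a1)*(ν-a2)) with hR
  have hRpos : 0 < R := Real.sqrt_pos.mpr hPQ
  have hR2 : R^2 = (ν-a1)*(ν-a2) := Real.sq_sqrt hPQ.le
  clear_value R
  rw [e1, e2]
  constructor
  · intro h
    have hReq : β1+β2 = 2*R := by
      field_simp at h
      linarith
    have hT2 : ((β1+β2)/2)^2 = (ν-a1)*(ν-a2) := by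
      rw [hReq]
      nlinarith [hR2]
    have hfin : Real.sqrt (((a1-a2)/2)^2 + ((β1+β2)/2)^2) = ν - (a1+a2)/2 := by
      rw [hT2, show ((a1-a2)/2)^2 + (ν-a1)*(ν-a2) = (ν - (a1+a2)/2)^2 by ring]
      exact Real.sqrt_sq (by linarith)
    rw [hfin]
    ring
  · intro h
    have hs2 : (Real.sqrt (((a1-a2)/2)^2 + ((β1+β2)/2)^2))^2
        = ((a1-a2)/2)^2 + ((β1+β2)/2)^2 := Real.sq_sqrt (by positivity)
    have hPQT : (ν-a1)*(ν-a2) = ((β1+β2)/2)^2 := by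
      rw [h]
      first
      | linear_combination hs2
      | linear_combination (-1 : ℝ) * hs2
      | nlinarith [hs2]
    have hRT : R = (β1+β2)/2 := by
      have : R^2 = ((β1+β2)/2)^2 := by rw [hR2, hPQT]
      nlinarith [hRpos, hT]
    rw [hRT]
    field_simp

end S12
/-- For a bounded, tridiagonal, 2-periodic operator `A` on `ℓ²(ℤ)` with
`A + A*` not diagonal and `ν > sup_i Re A_{i,i}`:
`√η₁ + √η₂ = 1 ↔ ν = r₀(A)`, where
`η₁ = |A_{1,2} + conj A_{2,1}|² / (4(ν − Re A_{1,1})(ν − Re A_{2,2}))` and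
`η₂ = |A_{2,3} + conj A_{3,2}|² / (4(ν − Re A_{2,2})(ν − Re A_{3,3}))`. -/
theorem sqrt_eta_add_sqrt_eta_eq_one_iff
    (A : HZ →L[ℂ] HZ)
    (htri : ∀ i j : ℤ, 1 < |i - j| → entry A i j = 0)
    (hper : ∀ i j : ℤ, entry A (i + 2) (j + 2) = entry A i j)
    (ν : ℝ) (hν : (⨆ i : ℤ, (entry A i i).re) < ν)
    (hnd : ¬ ∀ i j : ℤ, i ≠ j → entry (A + ContinuousLinearMap.adjoint A) i j = 0) :
    (Real.sqrt (‖entry A 1 2 + (starRingEnd ℂ) (entry A 2 1)‖ ^ 2 /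
        (4 * (ν - (entry A 1 1).re) * (ν - (entry A 2 2).re))) +
     Real.sqrt (‖entry A 2 3 + (starRingEnd ℂ) (entry A 3 2)‖ ^ 2 /
        (4 * (ν - (entry A 2 2).re) * (ν - (entry A 3 3).re))) = 1)
      ↔ ν = r0 A := by
  have hcc := S12.cc_ne A htri hper hnd
  have hc1 : entry A 1 2 + (starRingEnd ℂ) (entry A 2 1) = S12.cc A 1 := by
    rw [S12.cc]
    norm_num
  have hc2 : entry A 2 3 + (starRingEnd ℂ) (entry A 3 2) = S12.cc A 2 := by
    rw [S12.cc]
    norm_num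
  have h33 : entry A 3 3 = entry A 1 1 := hper 1 1
  rw [S12.iSup_diag A hper] at hν
  have h1 : (entry A 1 1).re < ν := lt_of_le_of_lt (le_max_left _ _) hν
  have h2 : (entry A 2 2).re < ν := lt_of_le_of_lt (le_max_right _ _) hν
  have hT : 0 < ‖S12.cc A 1‖ + ‖S12.cc A 2‖ := by
    rcases hcc with h | h
    · have := norm_pos_iff.mpr h
      have := norm_nonneg (S12.cc A 2)
      linarith
    · have := norm_pos_iff.mpr h
      have := norm_nonneg (S12.cc A 1)
      linarith
  rw [hc1, hc2, h33, S12.r0_eq A htri hper hcc]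
  exact S12.final_algebra (entry A 1 1).re (entry A 2 2).re ‖S12.cc A 1‖ ‖S12.cc A 2‖ ν
    (norm_nonneg _) (norm_nonneg _) hT h1 h2
end
end
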